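/- Let N ∈ ℝ^{r×r} be symmetric positive semidefinite, ε ∈ {−1,+1}^r, θ ∈ (0,1)^r, y_i = ε_{τ(i)}, Y = diag(y), Y_r = diag(ε), M = P N Pᵀ, and C_M = (4/n)·I + (1/(λn²))·Y M Y. Define 𝒜 = 4·I + (1/λ)·Y_r Q^{1/2} N Q^{1/2} Y_r and R = Q^{1/2} 𝒜^{−1} Q^{1/2}. Fix a ∈ {1,…,r}, set m_a = (N_{a,τ(i)})_{i=1}^n, s_a = Y_r (N_{a1}, …, N_{ar})ᵀ, and a_m = (1/(λn))·Y m_a. Let Δ ∈ ℝ^{n×n} be arbitrary with color-pair block averages Δ̄_{bc} = (1/(n_b n_c))·∑_{i: τ(i)=b} ∑_{j: τ(j)=c} Δ_{ij}, set β = ε ⊙ θ, g_Δ = Y_r Δ̄ Q β, b = (1/(λn²))·Y Δ Y (Pθ), b_∥ = P·((1/(λn))·g_Δ), and b_⊥ = b − b_∥. Then: a_mᵀ C_M^{−1} a_m = (1/λ²)·s_aᵀ R s_a; a_mᵀ C_M^{−1} b = (1/λ²)·s_aᵀ R g_Δ; and bᵀ C_M^{−1} b = (1/λ²)·g_Δᵀ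 R g_Δ + (n/4)·‖b_⊥‖₂². -/

import Mathlib

open Matrix Set Finset

/-- Size of the template block `b` under the assignment `τ`. -/
def blockSize {n r : ℕ} (τ : Fin n → Fin r) (b : Fin r) : ℕ :=
  (univ.filter (fun i => τ i = b)).card

/-- Color-pair block averages `Ā_{bc} = (1/(n_b n_c))·∑_{τ(i)=b} ∑_{τ(j)=c} A_{ij}`. -/
noncomputable def blockAvgM {n r : ℕ} (τ : Fin n → Fin r)
    (A : Matrix (Fin n) (Fin n) ℝ) : Matrix (Fin r) (Fin r) ℝ :=
  Matrix.of fun b c =>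
    (1 / ((blockSize τ b : ℝ) * (blockSize τ c : ℝ))) *
      ∑ i ∈ univ.filter (fun i => τ i = b), ∑ j ∈ univ.filter (fun j => τ j = c), A i j

/-!
Write `S = P Q^{-1/2}`. Its columns are orthogonal with `Sᵀ S = n • 1`, and, since the sign
matrices commute with `P` and with `Q^{1/2}`, `Y M Y = S (Y_r Q^{1/2} N Q^{1/2} Y_r) Sᵀ`. Hence
`C_M` maps the column space of `P` to itself, acting there like `𝒜 / n` in the coordinates of
`S`, and acts on its orthogonal complement as the scalar `4 / n`. The vectors `a_m` and `b_∥` lie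
in the column space of `P`, while `b_⊥` is orthogonal to it because `Pᵀ Δ P` is the matrix of
block averages `Δ̄` rescaled by the block sizes on both sides. So every form splits into an
`𝒜⁻¹` part on the templates and the residual `(n/4) ‖b_⊥‖²`.
-/

namespace Matrix

theorem dotProduct_mulVec_eq_dotProduct_transpose_mulVec {m k R : Type*} [Fintype m] [Fintype k]
    [CommSemiring R] (S : Matrix m k R) (x : k → R) (v : m → R) :
    (S *ᵥ x) ⬝ᵥ v = x ⬝ᵥ (Sᵀ *ᵥ v) := by
  rw [dotProduct_mulVec, vecMul_transpose]

theorem inv_mul_eq_mul_inv_of_mul_eq_mul {m k R : Type*} [Fintype m] [Fintype k] [DecidableEq m]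
    [DecidableEq k] [CommRing R] {C : Matrix m m R} {A : Matrix k k R} {S : Matrix m k R}
    (hC : IsUnit C.det) (hA : IsUnit A.det) (h : C * S = S * A) : C⁻¹ * S = S * A⁻¹ :=
  calc C⁻¹ * S = C⁻¹ * (S * A) * A⁻¹ := by
        rw [Matrix.mul_assoc, Matrix.mul_assoc, mul_nonsing_inv A hA, Matrix.mul_one]
    _ = S * A⁻¹ := by rw [← h, ← Matrix.mul_assoc, nonsing_inv_mul C hC, Matrix.one_mul]

variable {m k 𝕜 : Type*} [Fintype m] [Fintype k] [Field 𝕜] [DecidableEq m]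

theorem inv_mulVec_eq_of_mulVec_eq_smul {C : Matrix m m 𝕜} (hC : IsUnit C.det) {c : 𝕜}
    {u : m → 𝕜} (h : C *ᵥ u = c • u) (hc : c ≠ 0) : C⁻¹ *ᵥ u = c⁻¹ • u :=
  calc C⁻¹ *ᵥ u = c⁻¹ • C⁻¹ *ᵥ (c • u) := by rw [mulVec_smul, inv_smul_smul₀ hc]
    _ = c⁻¹ • u := by rw [← h, mulVec_mulVec, nonsing_inv_mul C hC, one_mulVec]

variable {S : Matrix m k 𝕜} {s : 𝕜} (c : 𝕜) (K : Matrix k k 𝕜)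

theorem smul_one_add_mul_mul_transpose_mulVec {u : m → 𝕜} (hu : Sᵀ *ᵥ u = 0) :
    (c • 1 + S * K * Sᵀ) *ᵥ u = c • u := by
  rw [add_mulVec, smul_mulVec, one_mulVec, ← mulVec_mulVec, hu, mulVec_zero, add_zero]

variable [DecidableEq k]

theorem smul_one_add_mul_mul_transpose_mul (hS : Sᵀ * S = s • 1) :
    (c • 1 + S * K * Sᵀ) * S = S * (c • 1 + s • K) := by
  simp only [Matrix.add_mul, Matrix.mul_add, Matrix.mul_assoc, hS, Matrix.mul_smul,
    Matrix.smul_mul, Matrix.mul_one, Matrix.one_mul]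

theorem dotProduct_inv_mulVec_add (hS : Sᵀ * S = s • 1)
    (hC : IsUnit (c • 1 + S * K * Sᵀ).det) (hA : IsUnit (c • 1 + s • K).det) (hc : c ≠ 0)
    (x z : k → 𝕜) {u u' : m → 𝕜} (hu : Sᵀ *ᵥ u = 0) (hu' : Sᵀ *ᵥ u' = 0) :
    (S *ᵥ x + u) ⬝ᵥ ((c • 1 + S * K * Sᵀ)⁻¹ *ᵥ (S *ᵥ z + u')) =
      s * (x ⬝ᵥ ((c • 1 + s • K)⁻¹ *ᵥ z)) + c⁻¹ * (u ⬝ᵥ u') := by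
  have hrange : (c • 1 + S * K * Sᵀ)⁻¹ *ᵥ (S *ᵥ z) = S *ᵥ ((c • 1 + s • K)⁻¹ *ᵥ z) := by
    rw [mulVec_mulVec, mulVec_mulVec,
      inv_mul_eq_mul_inv_of_mul_eq_mul hC hA (smul_one_add_mul_mul_transpose_mul c K hS)]
  have hperp := inv_mulVec_eq_of_mulVec_eq_smul hC
    (smul_one_add_mul_mul_transpose_mulVec c K hu') hc
  rw [mulVec_add, hrange, hperp, add_dotProduct, dotProduct_add, dotProduct_add,
    dotProduct_mulVec_eq_dotProduct_transpose_mulVec, mulVec_mulVec, hS, smul_mulVec, one_mulVec,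
    dotProduct_mulVec_eq_dotProduct_transpose_mulVec, mulVec_smul, hu', dotProduct_comm u,
    dotProduct_mulVec_eq_dotProduct_transpose_mulVec, hu]
  simp only [dotProduct_smul, dotProduct_zero, smul_eq_mul, mul_zero, zero_add, add_zero]

theorem dotProduct_inv_mulVec_add_of_transpose_mul_self {P : Matrix m k 𝕜}
    {Qh : Matrix k k 𝕜} (hQh : Qhᵀ = Qh) (hQhu : IsUnit Qh.det)
    (hP : Pᵀ * P = s • (Qh * Qh)) (G : Matrix k k 𝕜)
    (hC : IsUnit (c • 1 + P * G * Pᵀ).det) (hA : IsUnit (c • 1 + s • (Qh * G * Qh)).det)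
    (hc : c ≠ 0) (x z : k → 𝕜) {u u' : m → 𝕜} (hu : Pᵀ *ᵥ u = 0) (hu' : Pᵀ *ᵥ u' = 0) :
    (P *ᵥ x + u) ⬝ᵥ ((c • 1 + P * G * Pᵀ)⁻¹ *ᵥ (P *ᵥ z + u')) =
      s * (x ⬝ᵥ ((Qh * (c • 1 + s • (Qh * G * Qh))⁻¹ * Qh) *ᵥ z)) + c⁻¹ * (u ⬝ᵥ u') := by
  obtain ⟨S, hPS, hSt, hSS⟩ : ∃ S : Matrix m k 𝕜, P = S * Qh ∧ Sᵀ = Qh⁻¹ * Pᵀ ∧ Sᵀ * S = s • 1 := by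
    refine ⟨P * Qh⁻¹, ?_, ?_, ?_⟩
    · rw [Matrix.mul_assoc, nonsing_inv_mul Qh hQhu, Matrix.mul_one]
    · rw [transpose_mul, transpose_nonsing_inv, hQh]
    · rw [transpose_mul, transpose_nonsing_inv, hQh, Matrix.mul_assoc, ← Matrix.mul_assoc Pᵀ, hP,
        Matrix.smul_mul, Matrix.mul_smul, Matrix.mul_assoc Qh, mul_nonsing_inv Qh hQhu,
        Matrix.mul_one, nonsing_inv_mul Qh hQhu]
  have hPGP : P * G * Pᵀ = S * (Qh * G * Qh) * Sᵀ := by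
    rw [hPS, transpose_mul, hQh]
    simp only [Matrix.mul_assoc]
  have hPv (v : k → 𝕜) : P *ᵥ v = S *ᵥ (Qh *ᵥ v) := by rw [hPS, mulVec_mulVec]
  have hperp {v : m → 𝕜} (hv : Pᵀ *ᵥ v = 0) : Sᵀ *ᵥ v = 0 := by
    rw [hSt, ← mulVec_mulVec, hv, mulVec_zero]
  rw [hPGP] at hC ⊢
  rw [hPv, hPv, dotProduct_inv_mulVec_add c _ hSS hC hA hc _ _ (hperp hu) (hperp hu'),
    dotProduct_mulVec_eq_dotProduct_transpose_mulVec, hQh, mulVec_mulVec, mulVec_mulVec]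

end Matrix

theorem Matrix.PosSemidef.posDef_smul_one_add_smul_mul_mul_transpose {m k : Type*} [Fintype m]
    [DecidableEq m] [Fintype k] {N : Matrix k k ℝ} (hN : N.PosSemidef) {c d : ℝ} (hc : 0 < c)
    (hd : 0 ≤ d) (X : Matrix m k ℝ) : (c • 1 + d • (X * N * Xᵀ)).PosDef :=
  (PosDef.one.smul hc).add_posSemidef <| by
    simpa only [conjTranspose_eq_transpose_of_trivial] using
      (hN.mul_mul_conjTranspose_same X).smul hd

def membershipMatrix {ι κ : Type*} [DecidableEq κ] (τ : ι → κ) : Matrix ι κ ℝ :=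
  of fun i b => if τ i = b then 1 else 0

section Membership

variable {ι κ : Type*} [Fintype κ] [DecidableEq κ] (τ : ι → κ)

theorem membershipMatrix_mulVec (v : κ → ℝ) : membershipMatrix τ *ᵥ v = v ∘ τ := by
  ext i
  simp [membershipMatrix, mulVec, dotProduct]

variable [Fintype ι] [DecidableEq ι]

theorem diagonal_comp_mul_membershipMatrix (ε : κ → ℝ) :
    diagonal (ε ∘ τ) * membershipMatrix τ = membershipMatrix τ * diagonal ε := by
  ext i b
  by_cases h : τ i = b <;> simp [membershipMatrix, h]

theorem membershipMatrix_transpose_mul_diagonal_comp (ε : κ → ℝ) :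
    (membershipMatrix τ)ᵀ * diagonal (ε ∘ τ) = diagonal ε * (membershipMatrix τ)ᵀ := by
  simpa only [transpose_mul, diagonal_transpose] using
    congrArg transpose (diagonal_comp_mul_membershipMatrix τ ε)

theorem diagonal_comp_conj_membershipMatrix_mul_mul_transpose
    (ε : κ → ℝ) (N : Matrix κ κ ℝ) :
    diagonal (ε ∘ τ) * (membershipMatrix τ * N * (membershipMatrix τ)ᵀ) * diagonal (ε ∘ τ) =
      membershipMatrix τ * (diagonal ε * N * diagonal ε) * (membershipMatrix τ)ᵀ := by
  simp only [← Matrix.mul_assoc, diagonal_comp_mul_membershipMatrix]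
  simp only [Matrix.mul_assoc, membershipMatrix_transpose_mul_diagonal_comp]

end Membership

section BlockAverages

variable {n r : ℕ} (τ : Fin n → Fin r)

theorem blockSize_pos (hτ : Function.Surjective τ) (b : Fin r) : 0 < blockSize τ b := by
  obtain ⟨i, hi⟩ := hτ b
  exact card_pos.mpr ⟨i, by simp [hi]⟩

theorem membershipMatrix_transpose_mul_self :
    (membershipMatrix τ)ᵀ * membershipMatrix τ = diagonal fun b => (blockSize τ b : ℝ) := by
  ext b c
  simp only [membershipMatrix, mul_apply, transpose_apply, of_apply, diagonal_apply, ite_mul,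
    one_mul, zero_mul]
  by_cases hbc : b = c
  · subst hbc
    simp [blockSize, sum_ite, filter_filter]
  · simp +contextual [hbc]

theorem transpose_mul_mul_membershipMatrix_apply (A : Matrix (Fin n) (Fin n) ℝ) (b c : Fin r) :
    ((membershipMatrix τ)ᵀ * A * membershipMatrix τ) b c =
      ∑ i ∈ univ.filter (fun i => τ i = b), ∑ j ∈ univ.filter (fun j => τ j = c), A i j := by
  simp only [membershipMatrix, mul_apply, transpose_apply, of_apply, ite_mul, one_mul, zero_mul,
    mul_ite, mul_one, mul_zero, ← sum_filter]
  exact sum_comm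

theorem membershipMatrix_transpose_mul_mul (hτ : Function.Surjective τ)
    (A : Matrix (Fin n) (Fin n) ℝ) :
    (membershipMatrix τ)ᵀ * A * membershipMatrix τ =
      diagonal (fun b => (blockSize τ b : ℝ)) * blockAvgM τ A *
        diagonal fun b => (blockSize τ b : ℝ) := by
  ext b c
  have hb : (blockSize τ b : ℝ) ≠ 0 := by exact_mod_cast (blockSize_pos τ hτ b).ne'
  have hc : (blockSize τ c : ℝ) ≠ 0 := by exact_mod_cast (blockSize_pos τ hτ c).ne'
  rw [transpose_mul_mul_membershipMatrix_apply, mul_diagonal, diagonal_mul, blockAvgM, of_apply]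
  field_simp

theorem membershipMatrix_transpose_mul_conj_mul (hτ : Function.Surjective τ) (ε : Fin r → ℝ)
    (A : Matrix (Fin n) (Fin n) ℝ) :
    (membershipMatrix τ)ᵀ * (diagonal (ε ∘ τ) * A * diagonal (ε ∘ τ)) * membershipMatrix τ =
      (membershipMatrix τ)ᵀ * membershipMatrix τ *
        (diagonal ε * blockAvgM τ A * diagonal (fun b => (blockSize τ b : ℝ)) * diagonal ε) := by
  calc (membershipMatrix τ)ᵀ * (diagonal (ε ∘ τ) * A * diagonal (ε ∘ τ)) * membershipMatrix τ
      = diagonal ε * ((membershipMatrix τ)ᵀ * A * membershipMatrix τ) * diagonal ε := by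
        simp only [← Matrix.mul_assoc, membershipMatrix_transpose_mul_diagonal_comp]
        simp only [Matrix.mul_assoc, diagonal_comp_mul_membershipMatrix]
    _ = _ := by
        rw [membershipMatrix_transpose_mul_mul τ hτ, membershipMatrix_transpose_mul_self]
        simp only [← Matrix.mul_assoc]
        rw [(commute_diagonal ε _).eq]

end BlockAverages

noncomputable def sqrtBlockWeights {n r : ℕ} (τ : Fin n → Fin r) : Matrix (Fin r) (Fin r) ℝ :=
  diagonal fun b => √((blockSize τ b : ℝ) / n)

section SqrtBlockWeights

variable {n r : ℕ} (τ : Fin n → Fin r)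

theorem sqrtBlockWeights_transpose : (sqrtBlockWeights τ)ᵀ = sqrtBlockWeights τ :=
  diagonal_transpose _

theorem isUnit_det_sqrtBlockWeights (hn : 0 < n) (hτ : Function.Surjective τ) :
    IsUnit (sqrtBlockWeights τ).det := by
  rw [sqrtBlockWeights, det_diagonal]
  refine (prod_pos fun b _ => Real.sqrt_pos.mpr (div_pos ?_ ?_)).ne'.isUnit
  · exact Nat.cast_pos.mpr (blockSize_pos τ hτ b)
  · exact Nat.cast_pos.mpr hn

theorem membershipMatrix_transpose_mul_self_eq_smul_sqrtBlockWeights (hn : n ≠ 0) :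
    (membershipMatrix τ)ᵀ * membershipMatrix τ =
      (n : ℝ) • (sqrtBlockWeights τ * sqrtBlockWeights τ) := by
  rw [membershipMatrix_transpose_mul_self, sqrtBlockWeights, diagonal_mul_diagonal,
    ← diagonal_smul]
  congr 1
  ext b
  rw [Pi.smul_apply, smul_eq_mul, Real.mul_self_sqrt (by positivity)]
  field_simp

theorem sqrtBlockWeights_conj (ε : Fin r → ℝ) (N : Matrix (Fin r) (Fin r) ℝ) :
    sqrtBlockWeights τ * (diagonal ε * N * diagonal ε) * sqrtBlockWeights τ =
      diagonal ε * sqrtBlockWeights τ * N * sqrtBlockWeights τ * diagonal ε := by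
  have h : diagonal ε * sqrtBlockWeights τ = sqrtBlockWeights τ * diagonal ε :=
    (commute_diagonal _ _).eq
  calc sqrtBlockWeights τ * (diagonal ε * N * diagonal ε) * sqrtBlockWeights τ
      = sqrtBlockWeights τ * diagonal ε * N * (diagonal ε * sqrtBlockWeights τ) := by
        simp only [Matrix.mul_assoc]
    _ = diagonal ε * sqrtBlockWeights τ * N * (sqrtBlockWeights τ * diagonal ε) := by rw [h]
    _ = _ := by simp only [Matrix.mul_assoc]

end SqrtBlockWeights

theorem dotProduct_curvature_inv_mulVec {n r : ℕ} (hn : 0 < n) {lam : ℝ} (hlam : 0 < lam)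
    {τ : Fin n → Fin r} (hτ : Function.Surjective τ)
    {N : Matrix (Fin r) (Fin r) ℝ} (hN : N.PosSemidef) (ε : Fin r → ℝ)
    {CM : Matrix (Fin n) (Fin n) ℝ}
    (hCM : CM = ((4 : ℝ) / n) • 1 + (1 / (lam * (n : ℝ) ^ 2)) •
      (diagonal (ε ∘ τ) * (membershipMatrix τ * N * (membershipMatrix τ)ᵀ) * diagonal (ε ∘ τ)))
    {calA : Matrix (Fin r) (Fin r) ℝ}
    (hcalA : calA = (4 : ℝ) • 1 + (1 / lam) • (diagonal ε * sqrtBlockWeights τ * N *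
      sqrtBlockWeights τ * diagonal ε))
    (x z : Fin r → ℝ) {u u' : Fin n → ℝ}
    (hu : (membershipMatrix τ)ᵀ *ᵥ u = 0) (hu' : (membershipMatrix τ)ᵀ *ᵥ u' = 0) :
    (membershipMatrix τ *ᵥ ((1 / (lam * n)) • x) + u) ⬝ᵥ
        (CM⁻¹ *ᵥ (membershipMatrix τ *ᵥ ((1 / (lam * n)) • z) + u')) =
      1 / lam ^ 2 * (x ⬝ᵥ ((sqrtBlockWeights τ * calA⁻¹ * sqrtBlockWeights τ) *ᵥ z)) +
        n / 4 * (u ⬝ᵥ u') := by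
  set P := membershipMatrix τ
  have hn0 : (0 : ℝ) < n := Nat.cast_pos.mpr hn
  set G := (1 / (lam * (n : ℝ) ^ 2)) • (diagonal ε * N * diagonal ε)
  have hCM' : CM = ((4 : ℝ) / n) • 1 + P * G * Pᵀ := by
    rw [hCM, diagonal_comp_conj_membershipMatrix_mul_mul_transpose, Matrix.mul_smul,
      Matrix.smul_mul]
  have hA : ((4 : ℝ) / n) • 1 + (n : ℝ) • (sqrtBlockWeights τ * G * sqrtBlockWeights τ) =
      (n : ℝ)⁻¹ • calA := by
    rw [hcalA, smul_add, smul_smul, Matrix.mul_smul, Matrix.smul_mul, smul_smul, smul_smul,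
      sqrtBlockWeights_conj]
    congr 2 <;> field_simp
  have hcalA_pd : calA.PosDef := by
    have h := hN.posDef_smul_one_add_smul_mul_mul_transpose four_pos (one_div_nonneg.mpr hlam.le)
      (diagonal ε * sqrtBlockWeights τ)
    rwa [transpose_mul, sqrtBlockWeights_transpose, diagonal_transpose, ← Matrix.mul_assoc,
      ← hcalA] at h
  have hCM_pd : CM.PosDef := by
    have h := hN.posDef_smul_one_add_smul_mul_mul_transpose (div_pos four_pos hn0)
      (by positivity : 0 ≤ 1 / (lam * (n : ℝ) ^ 2)) (diagonal (ε ∘ τ) * P)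
    rw [hCM]
    convert h using 3
    rw [transpose_mul, diagonal_transpose]
    simp only [Matrix.mul_assoc]
  have hAinv : ((n : ℝ)⁻¹ • calA)⁻¹ = (n : ℝ) • calA⁻¹ := by
    have h := inv_smul' calA (Units.mk0 (n : ℝ)⁻¹ (by positivity)) hcalA_pd.det_pos.ne'.isUnit
    rwa [Units.smul_def, Units.smul_def, Units.val_inv_eq_inv_val, Units.val_mk0, inv_inv] at h
  rw [hCM'] at hCM_pd ⊢
  rw [dotProduct_inv_mulVec_add_of_transpose_mul_self _ (sqrtBlockWeights_transpose τ)
    (isUnit_det_sqrtBlockWeights τ hn hτ)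
    (membershipMatrix_transpose_mul_self_eq_smul_sqrtBlockWeights τ hn.ne') G
    hCM_pd.det_pos.ne'.isUnit
    (by rw [hA]; exact (hcalA_pd.smul (by positivity)).det_pos.ne'.isUnit) (by positivity)
    _ _ hu hu', hA, hAinv]
  simp only [Matrix.mul_smul, Matrix.smul_mul, smul_mulVec, mulVec_smul, smul_dotProduct,
    dotProduct_smul, smul_eq_mul]
  field_simp

theorem membershipMatrix_transpose_mulVec_perturbation {n r : ℕ} (hn : n ≠ 0)
    {τ : Fin n → Fin r} (hτ : Function.Surjective τ) (lam : ℝ) (ε θ : Fin r → ℝ)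
    (Δ : Matrix (Fin n) (Fin n) ℝ) :
    (membershipMatrix τ)ᵀ *ᵥ ((1 / (lam * (n : ℝ) ^ 2)) •
        (diagonal (ε ∘ τ) *ᵥ (Δ *ᵥ (diagonal (ε ∘ τ) *ᵥ (membershipMatrix τ *ᵥ θ))))) =
      (membershipMatrix τ)ᵀ *ᵥ (membershipMatrix τ *ᵥ ((1 / (lam * n)) •
        (diagonal ε *ᵥ (blockAvgM τ Δ *ᵥ
          (diagonal (fun b => (blockSize τ b : ℝ) / n) *ᵥ fun b => ε b * θ b))))) := by
  have h := membershipMatrix_transpose_mul_conj_mul τ hτ ε Δ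
  have hβ : (fun b => ε b * θ b) = diagonal ε *ᵥ θ := (funext (mulVec_diagonal ε θ)).symm
  have hD : diagonal (fun b => (blockSize τ b : ℝ) / n) =
      (n : ℝ)⁻¹ • diagonal fun b => (blockSize τ b : ℝ) := by
    rw [← diagonal_smul]
    congr 1
    ext b
    simp [div_eq_inv_mul]
  simp only [Matrix.mul_assoc] at h
  simp only [hβ, hD, mulVec_smul, mulVec_mulVec, h, Matrix.smul_mul, smul_mulVec,
    smul_smul]
  congr 1
  field_simp

theorem curvature_template_identities
    {n r : ℕ} (hn : 0 < n) (lam : ℝ) (hlam : 0 < lam)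
    (τ : Fin n → Fin r) (hτ : Function.Surjective τ)
    (P : Matrix (Fin n) (Fin r) ℝ)
    (hP : ∀ i b, P i b = if τ i = b then 1 else 0)
    (phat : Fin r → ℝ) (hphat : ∀ b, phat b = (blockSize τ b : ℝ) / n)
    (Q : Matrix (Fin r) (Fin r) ℝ) (hQ : Q = Matrix.diagonal phat)
    (Qh : Matrix (Fin r) (Fin r) ℝ)
    (hQh : Qh = Matrix.diagonal (fun b => Real.sqrt (phat b)))
    (N : Matrix (Fin r) (Fin r) ℝ) (hN : N.PosSemidef)
    (ε : Fin r → ℝ)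
    (θ : Fin r → ℝ)
    (y : Fin n → ℝ) (hy : ∀ i, y i = ε (τ i))
    (Y : Matrix (Fin n) (Fin n) ℝ) (hY : Y = Matrix.diagonal y)
    (Yr : Matrix (Fin r) (Fin r) ℝ) (hYr : Yr = Matrix.diagonal ε)
    (M : Matrix (Fin n) (Fin n) ℝ) (hM : M = P * N * Pᵀ)
    (CM : Matrix (Fin n) (Fin n) ℝ)
    (hCM : CM = ((4 : ℝ) / n) • (1 : Matrix (Fin n) (Fin n) ℝ) +
      (1 / (lam * (n : ℝ) ^ 2)) • (Y * M * Y))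
    (calA : Matrix (Fin r) (Fin r) ℝ)
    (hcalA : calA = (4 : ℝ) • (1 : Matrix (Fin r) (Fin r) ℝ) +
      (1 / lam) • (Yr * Qh * N * Qh * Yr))
    (R : Matrix (Fin r) (Fin r) ℝ) (hR : R = Qh * calA⁻¹ * Qh)
    (a : Fin r)
    (ma : Fin n → ℝ) (hma : ∀ i, ma i = N a (τ i))
    (sa : Fin r → ℝ) (hsa : sa = Yr *ᵥ fun b => N a b)
    (am : Fin n → ℝ) (ham : am = (1 / (lam * n)) • (Y *ᵥ ma))
    (Δ : Matrix (Fin n) (Fin n) ℝ)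
    (β : Fin r → ℝ) (hβ : ∀ b, β b = ε b * θ b)
    (gΔ : Fin r → ℝ) (hgΔ : gΔ = Yr *ᵥ (blockAvgM τ Δ *ᵥ (Q *ᵥ β)))
    (b : Fin n → ℝ)
    (hb : b = (1 / (lam * (n : ℝ) ^ 2)) • (Y *ᵥ (Δ *ᵥ (Y *ᵥ (P *ᵥ θ)))))
    (bpar : Fin n → ℝ) (hbpar : bpar = P *ᵥ ((1 / (lam * n)) • gΔ))
    (bperp : Fin n → ℝ) (hbperp : bperp = b - bpar) :
    am ⬝ᵥ (CM⁻¹ *ᵥ am) = (1 / lam ^ 2) * (sa ⬝ᵥ (R *ᵥ sa)) ∧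
    am ⬝ᵥ (CM⁻¹ *ᵥ b) = (1 / lam ^ 2) * (sa ⬝ᵥ (R *ᵥ gΔ)) ∧
    b ⬝ᵥ (CM⁻¹ *ᵥ b) =
      (1 / lam ^ 2) * (gΔ ⬝ᵥ (R *ᵥ gΔ)) + ((n : ℝ) / 4) * ∑ i, (bperp i) ^ 2 := by
  obtain rfl : P = membershipMatrix τ := Matrix.ext hP
  obtain rfl : y = ε ∘ τ := funext hy
  obtain rfl : phat = fun b => (blockSize τ b : ℝ) / n := funext hphat
  obtain rfl : β = fun b => ε b * θ b := funext hβ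
  obtain rfl : Qh = sqrtBlockWeights τ := hQh
  obtain rfl : ma = membershipMatrix τ *ᵥ N a := by
    rw [membershipMatrix_mulVec]; exact funext hma
  subst hQ hY hYr hM hR hsa ham
  have hform := dotProduct_curvature_inv_mulVec hn hlam hτ hN ε hCM hcalA
  have hperp : (membershipMatrix τ)ᵀ *ᵥ bperp = 0 := by
    rw [hbperp, hbpar, hb, hgΔ, mulVec_sub, sub_eq_zero,
      membershipMatrix_transpose_mulVec_perturbation hn.ne' hτ]
  have ham_lift : (1 / (lam * n)) • (diagonal (ε ∘ τ) *ᵥ (membershipMatrix τ *ᵥ N a)) =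
      membershipMatrix τ *ᵥ ((1 / (lam * n)) • (diagonal ε *ᵥ fun b => N a b)) + 0 := by
    rw [mulVec_mulVec, diagonal_comp_mul_membershipMatrix, ← mulVec_mulVec, mulVec_smul,
      add_zero]
  have hb_split : b = membershipMatrix τ *ᵥ ((1 / (lam * n)) • gΔ) + bperp := by
    rw [hbperp, hbpar, add_sub_cancel]
  refine ⟨?_, ?_, ?_⟩
  · rw [ham_lift, hform _ _ (mulVec_zero _) (mulVec_zero _)]
    simp
  · rw [ham_lift, hb_split, hform _ _ (mulVec_zero _) hperp]
    simp
  · rw [hb_split, hform _ _ hperp hperp]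
    simp only [dotProduct, sq]
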